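/- Let C be a pointed category in which every morphism admits an (epi, mono)-factorisation, let (U, V) be a torsion theory, and let S be a Serre subcategory. Then S ∗ V is closed under subobjects, and dually U ∗ S is closed under quotients. -/
import Mathlib


open CategoryTheory CategoryTheory.Limits

universe v u

variable {C : Type u} [Category.{v} C]

/-- A morphism is `Z`-trivial if it factors through an object of `Z`. -/
def IsTrivialMor (Z : Set C) {X Y : C} (f : X ⟶ Y) : Prop :=
  ∃ (W : C) (p : X ⟶ W) (q : W ⟶ Y), W ∈ Z ∧ p ≫ q = f

/-- `ε` is a `Z`-kernel of `f`. -/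
def IsZKernel (Z : Set C) {K A B : C} (ε : K ⟶ A) (f : A ⟶ B) : Prop :=
  IsTrivialMor Z (ε ≫ f) ∧
    ∀ ⦃Y : C⦄ (l : Y ⟶ A), IsTrivialMor Z (l ≫ f) → ∃! l' : Y ⟶ K, l' ≫ ε = l

/-- `π` is a `Z`-cokernel of `f`. -/
def IsZCokernel (Z : Set C) {A B Q : C} (f : A ⟶ B) (π : B ⟶ Q) : Prop :=
  IsTrivialMor Z (f ≫ π) ∧
    ∀ ⦃Y : C⦄ (l : B ⟶ Y), IsTrivialMor Z (f ≫ l) → ∃! l' : Q ⟶ Y, π ≫ l' = l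

/-- `0 → A → X → B → 0` is a short exact sequence: `f` is a kernel of `g`
and `g` is a cokernel of `f`. -/
structure IsShortExactSeq [HasZeroMorphisms C] {A X B : C} (f : A ⟶ X) (g : X ⟶ B) : Prop where
  zero : f ≫ g = 0
  ker : ∀ ⦃Y : C⦄ (l : Y ⟶ X), l ≫ g = 0 → ∃! l' : Y ⟶ A, l' ≫ f = l
  coker : ∀ ⦃Y : C⦄ (l : X ⟶ Y), f ≫ l = 0 → ∃! l' : B ⟶ Y, g ≫ l' = l

/-- A torsion theory in a pointed category. -/
structure TorsionTheory (C : Type u) [Category.{v} C] [HasZeroMorphisms C] :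
    Type (max u v) where
  T : Set C
  F : Set C
  repleteT : ∀ ⦃X Y : C⦄, (X ≅ Y) → X ∈ T → Y ∈ T
  repleteF : ∀ ⦃X Y : C⦄, (X ≅ Y) → X ∈ F → Y ∈ F
  hom_zero : ∀ ⦃X Y : C⦄, X ∈ T → Y ∈ F → ∀ f : X ⟶ Y, f = 0
  exists_seq : ∀ X : C, ∃ (A B : C) (f : A ⟶ X) (g : X ⟶ B),
      A ∈ T ∧ B ∈ F ∧ IsShortExactSeq f g

/-- A pretorsion theory, with class of trivial objects `T ∩ F`. -/
structure PretorsionTheory (C : Type u) [Category.{v} C] : Type (max u v) where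
  T : Set C
  F : Set C
  repleteT : ∀ ⦃X Y : C⦄, (X ≅ Y) → X ∈ T → Y ∈ T
  repleteF : ∀ ⦃X Y : C⦄, (X ≅ Y) → X ∈ F → Y ∈ F
  hom_triv : ∀ ⦃X Y : C⦄, X ∈ T → Y ∈ F → ∀ f : X ⟶ Y, IsTrivialMor (T ∩ F) f
  exists_seq : ∀ X : C, ∃ (A B : C) (f : A ⟶ X) (g : X ⟶ B),
      A ∈ T ∧ B ∈ F ∧ IsZKernel (T ∩ F) f g ∧ IsZCokernel (T ∩ F) f g

/-- `A ∗ B`: objects that are extensions of an object of `A` by an object of `B`. -/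
def extClass [HasZeroMorphisms C] (A B : Set C) : Set C :=
  {X | ∃ (A₀ B₀ : C) (f : A₀ ⟶ X) (g : X ⟶ B₀), A₀ ∈ A ∧ B₀ ∈ B ∧ IsShortExactSeq f g}

/-- A Serre subcategory: closed under subobjects, quotients and extensions. -/
def SerreSub [HasZeroMorphisms C] (S : Set C) : Prop :=
  (∀ ⦃A B : C⦄ (m : A ⟶ B), Mono m → B ∈ S → A ∈ S) ∧
  (∀ ⦃A B : C⦄ (e : A ⟶ B), Epi e → A ∈ S → B ∈ S) ∧
  (∀ ⦃A X B : C⦄ (f : A ⟶ X) (g : X ⟶ B), IsShortExactSeq f g → A ∈ S → B ∈ S → X ∈ S)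

/-- The hom relation identifying morphisms whose difference is `Z`-trivial. -/
def trivRel [Preadditive C] (Z : Set C) : HomRel C :=
  fun {_ _} f g => IsTrivialMor Z (f - g)


lemma ses_mono [HasZeroMorphisms C] {A X B : C} {f : A ⟶ X} {g : X ⟶ B}
    (h : IsShortExactSeq f g) : Mono f := by
  constructor
  intro Y u v huv
  have h0 : (u ≫ f) ≫ g = 0 := by rw [Category.assoc, h.zero, comp_zero]
  obtain ⟨l', -, hu⟩ := h.ker (u ≫ f) h0
  have := hu u rfl
  have := hu v huv.symm
  simp_all

lemma ses_epi [HasZeroMorphisms C] {A X B : C} {f : A ⟶ X} {g : X ⟶ B}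
    (h : IsShortExactSeq f g) : Epi g := by
  constructor
  intro Y u v huv
  have h0 : f ≫ g ≫ u = 0 := by rw [← Category.assoc, h.zero, zero_comp]
  obtain ⟨l', -, hu⟩ := h.coker (g ≫ u) h0
  have := hu u rfl
  have := hu v huv.symm
  simp_all

theorem stmt6 [HasZeroObject C] [HasZeroMorphisms C]
    (hFac : ∀ ⦃X Y : C⦄ (f : X ⟶ Y),
      ∃ (I : C) (e : X ⟶ I) (m : I ⟶ Y), Epi e ∧ Mono m ∧ e ≫ m = f)
    (TT : TorsionTheory C) (S : Set C) (hS : SerreSub S) :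
    (∀ ⦃N X : C⦄ (m : N ⟶ X), Mono m → X ∈ extClass S TT.F → N ∈ extClass S TT.F) ∧
    (∀ ⦃X Q : C⦄ (e : X ⟶ Q), Epi e → X ∈ extClass TT.T S → Q ∈ extClass TT.T S) := by
  constructor
  · rintro N X m hm ⟨S₀, V₀, f, g, hS₀, hV₀, hseq⟩
    obtain ⟨A, B, a, b, hA, hB, hab⟩ := TT.exists_seq N
    have hc0 : (a ≫ m) ≫ g = 0 := by
      rw [Category.assoc]; exact TT.hom_zero hA hV₀ _
    obtain ⟨h, hh, -⟩ := hseq.ker (a ≫ m) hc0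
    have hma : Mono (a ≫ m) := by
      have := ses_mono hab; exact mono_comp a m
    have hmono : Mono h := by
      have : Mono (h ≫ f) := by rw [hh]; exact hma
      exact mono_of_mono h f
    exact ⟨A, B, a, b, hS.1 h hmono hS₀, hB, hab⟩
  · rintro X Q e he ⟨T₀, S₀, f, g, hT₀, hS₀, hseq⟩
    obtain ⟨A, B, a, b, hA, hB, hab⟩ := TT.exists_seq Q
    have hc0 : f ≫ e ≫ b = 0 := by
      rw [← Category.assoc]; exact TT.hom_zero hT₀ hB _
    obtain ⟨h, hh, -⟩ := hseq.coker (e ≫ b) hc0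
    have heb : Epi (e ≫ b) := by
      have := ses_epi hab; exact epi_comp e b
    have hepi : Epi h := by
      have : Epi (g ≫ h) := by rw [hh]; exact heb
      exact epi_of_epi g h
    exact ⟨A, B, a, b, hA, hS.2.1 h hepi hS₀, hab⟩
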